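/- For any metric graph G with n vertices, weights in (0,1] including a vertex of weight 1, there exists a finite closed walk W of size O(n²) such that the cost of the infinite expansion Δ(W) is at most 6·OPT_G. -/

import Mathlib

open scoped ENNReal BigOperators

/-- Total edge length of the segment of the infinite walk `W` from index `a` to `b`. -/
noncomputable def walkLen {V : Type*} (l : V → V → ℝ≥0∞) (W : ℕ → V) (a b : ℕ) : ℝ≥0∞ :=
  ∑ i ∈ Finset.Ico a b, l (W i) (W (i + 1))

/-- The walk visits every vertex infinitely often. -/
def VisitsInfOften {V : Type*} (W : ℕ → V) : Prop :=
  ∀ v : V, ∀ N : ℕ, ∃ a : ℕ, N ≤ a ∧ W a = v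

/-- Latency of vertex `v` on infinite walk `W`: the supremum, over visits to `v`,
of the length of the sub-walk until the next visit to `v`. -/
noncomputable def latency {V : Type*} (l : V → V → ℝ≥0∞) (W : ℕ → V) (v : V) : ℝ≥0∞ :=
  ⨆ (a : ℕ) (_ : W a = v), ⨅ (b : ℕ) (_ : a < b ∧ W b = v), walkLen l W a b

/-- Cost of an infinite walk: the maximum weighted latency over all vertices. -/
noncomputable def walkCost {V : Type*} (l : V → V → ℝ≥0∞) (φ : V → ℝ≥0∞) (W : ℕ → V) : ℝ≥0∞ :=
  ⨆ v : V, φ v * latency l W v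

/-- Optimal cost over all infinite walks (complete graph) visiting all vertices
infinitely often. -/
noncomputable def OPT {V : Type*} (l : V → V → ℝ≥0∞) (φ : V → ℝ≥0∞) : ℝ≥0∞ :=
  ⨅ (W : ℕ → V) (_ : VisitsInfOften W), walkCost l φ W

/-!
Let `q = OPT / 97` and fix a walk `f` of cost below `100 q`. Then `f` returns to every vertex `v`
within `g v = 100 q / φ v`, and every vertex lies within `50 q` of a vertex `u` of weight one,
since `f` must leave `u` for it and come back within `100 q`.

Follow `f` from a visit to `u` until it has travelled `Λ = 10⁴ (n + 2) q`, and keep only `O(n²)`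
of its times: `n` visits to `u` spaced `10⁴ q` apart (anchors) and, for each vertex `v` with
`g v + 100 q < Λ`, a visit to `v` right after each multiple of `25 q` travelled (ticks). The
periodic walk runs through the kept times in order, shortcutting `f` by the triangle inequality.
Such a frequent vertex is met again within about `2 g v + 400 q`, at its next tick or, once past
the horizon, at its first tick after wrapping around. Every other vertex has weight `O(q / Λ)` and
is visited once per period by a detour from its own anchor; a detour costs at most `100 q`, so the
detours add only 1% plus a constant to any stretch of the walk. Hence every weighted latency is at
most `582 q = 6 OPT`.
-/

open Finset Function

attribute [local instance] Classical.propDecidable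

local notation "WL" => walkLen (fun x y => edist x y)

section WalkLen

variable {V : Type*} (l : V → V → ℝ≥0∞) (W : ℕ → V)

lemma walkLen_self (a : ℕ) : walkLen l W a a = 0 := by simp [walkLen]

lemma walkLen_succ_right {a b : ℕ} (h : a ≤ b) :
    walkLen l W a (b + 1) = walkLen l W a b + l (W b) (W (b + 1)) :=
  Finset.sum_Ico_succ_top h _

lemma walkLen_succ_left {a b : ℕ} (h : a < b) :
    walkLen l W a b = l (W a) (W (a + 1)) + walkLen l W (a + 1) b :=
  Finset.sum_eq_sum_Ico_succ_bot h _

lemma walkLen_one (a : ℕ) : walkLen l W a (a + 1) = l (W a) (W (a + 1)) := by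
  rw [walkLen_succ_right l W le_rfl, walkLen_self, zero_add]

lemma walkLen_two (a : ℕ) :
    walkLen l W a (a + 2) = l (W a) (W (a + 1)) + l (W (a + 1)) (W (a + 2)) := by
  rw [walkLen_succ_right l W (by omega), walkLen_one]

lemma walkLen_add {a b c : ℕ} (hab : a ≤ b) (hbc : b ≤ c) :
    walkLen l W a b + walkLen l W b c = walkLen l W a c :=
  Finset.sum_Ico_consecutive _ hab hbc

lemma walkLen_mono {a a' b b' : ℕ} (ha : a' ≤ a) (hb : b ≤ b') :
    walkLen l W a b ≤ walkLen l W a' b' :=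
  Finset.sum_le_sum_of_subset (Finset.Ico_subset_Ico ha hb)

lemma walkLen_comp_add (c a b : ℕ) :
    walkLen l (fun i => W (i + c)) a b = walkLen l W (a + c) (b + c) := by
  simp only [walkLen, ← Finset.sum_Ico_add' (fun i => l (W i) (W (i + 1))), add_right_comm]

variable {l W} {p : ℕ}

lemma walkLen_add_period (hW : Periodic W p) (a b : ℕ) :
    walkLen l W (a + p) (b + p) = walkLen l W a b := by
  rw [← walkLen_comp_add, show (fun i => W (i + p)) = W from funext hW]

lemma walkLen_rotate (hW : Periodic W p) (j : ℕ) :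
    walkLen l W j (j + p) = walkLen l W 0 p := by
  induction j with
  | zero => simp
  | succ n ih =>
    rcases Nat.eq_zero_or_pos p with rfl | hp
    · simp [walkLen_self]
    have hlast : W (n + p + 1) = W (n + 1) := by rw [add_right_comm]; exact hW (n + 1)
    rw [← ih, show n + 1 + p = n + p + 1 by omega, walkLen_succ_right l W (by omega),
      walkLen_succ_left l W (a := n) (by omega), hW n, hlast, add_comm]

end WalkLen

section Latency

lemma mul_latency_le_walkCost {V : Type*} (l : V → V → ℝ≥0∞) (φ : V → ℝ≥0∞) (W : ℕ → V)
    (v : V) :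
    φ v * latency l W v ≤ walkCost l φ W :=
  le_iSup (fun v => φ v * latency l W v) v

variable {V : Type*} {l : V → V → ℝ≥0∞} {W : ℕ → V} {v : V} {B : ℝ≥0∞}

lemma latency_le_of_returns
    (H : ∀ a, W a = v → ∃ b, a < b ∧ W b = v ∧ walkLen l W a b ≤ B) :
    latency l W v ≤ B := by
  refine iSup₂_le fun a ha => ?_
  obtain ⟨b, hab, hb, hlen⟩ := H a ha
  exact iInf₂_le_of_le b ⟨hab, hb⟩ hlen

lemma latency_le_of_periodic_returns {p : ℕ} (hp : 0 < p) (hW : Periodic W p)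
    (H : ∀ j < p, W j = v → ∃ k, j < k ∧ W k = v ∧ walkLen l W j k ≤ B) :
    latency l W v ≤ B := by
  refine latency_le_of_returns fun a ha => ?_
  have hdecomp : a % p + a / p * p = a := Nat.mod_add_div' a p
  have hshift : Periodic W (a / p * p) := by simpa only [smul_eq_mul] using hW.nsmul (a / p)
  obtain ⟨k, hjk, hk, hlen⟩ := H (a % p) (Nat.mod_lt _ hp) (by rw [hW.map_mod_nat, ha])
  have hlen' := walkLen_add_period (l := l) hshift (a % p) k
  rw [hdecomp] at hlen'
  exact ⟨k + a / p * p, by omega, by rw [hshift, hk], hlen'.trans_le hlen⟩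

lemma latency_le_walkLen_period {p : ℕ} (hp : 0 < p) (hW : Periodic W p) :
    latency l W v ≤ walkLen l W 0 p :=
  latency_le_of_periodic_returns hp hW fun j _ hj =>
    ⟨j + p, by omega, by rw [hW, hj], (walkLen_rotate hW j).le⟩

lemma le_latency_of_visit {a : ℕ} (ha : W a = v)
    (H : ∀ b, a < b → W b = v → B ≤ walkLen l W a b) : B ≤ latency l W v :=
  le_iSup₂_of_le a ha (le_iInf₂ fun b hb => H b hb.1 hb.2)

lemma exists_return_of_latency_lt (hlat : latency l W v < B) {a : ℕ} (ha : W a = v) :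
    ∃ b, a < b ∧ W b = v ∧ walkLen l W a b < B := by
  have h : ⨅ (b : ℕ) (_ : a < b ∧ W b = v), walkLen l W a b < B :=
    (le_iSup₂_of_le a ha le_rfl).trans_lt hlat
  obtain ⟨b, hb⟩ := iInf_lt_iff.mp h
  obtain ⟨⟨hab, hbv⟩, hlen⟩ := iInf_lt_iff.mp hb
  exact ⟨b, hab, hbv, hlen⟩

lemma exists_visit_after_of_latency_lt (hlat : latency l W v < B) {t a : ℕ} (hta : t ≤ a)
    (ht : W t = v) : ∃ b, a < b ∧ W b = v ∧ walkLen l W a b < B := by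
  have hlast : W (Nat.findGreatest (W · = v) a) = v :=
    Nat.findGreatest_spec (P := (W · = v)) hta ht
  obtain ⟨b, hlb, hb, hlen⟩ := exists_return_of_latency_lt hlat hlast
  have hab : a < b := by
    by_contra! hba
    exact Nat.findGreatest_is_greatest hlb hba hb
  exact ⟨b, hab, hb, (walkLen_mono l W (Nat.findGreatest_le a) le_rfl).trans_lt hlen⟩

end Latency

lemma visitsInfOften_of_periodic {V : Type*} {W : ℕ → V} {p : ℕ} (hp : 0 < p)
    (hW : Periodic W p) (hsurj : Surjective W) : VisitsInfOften W := by
  intro v N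
  obtain ⟨i, hi⟩ := hsurj v
  have hWN : Periodic W (N * p) := by simpa only [smul_eq_mul] using hW.nsmul N
  exact ⟨i + N * p, by nlinarith, by rw [hWN, hi]⟩

section Metric

variable {V : Type*} [PseudoEMetricSpace V] {W : ℕ → V}

lemma edist_le_walkLen {a b : ℕ} (h : a ≤ b) :
    edist (W a) (W b) ≤ WL W a b := by
  induction b, h using Nat.le_induction with
  | base => simp [walkLen_self]
  | succ n han ih =>
    rw [walkLen_succ_right _ _ han]
    exact (edist_triangle _ _ _).trans (add_le_add_left ih _)

lemma two_mul_edist_le_latency (hW : VisitsInfOften W) (u x : V) :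
    2 * edist u x ≤ latency (fun x y => edist x y) W u := by
  obtain ⟨t, -, ht⟩ := hW u 0
  obtain ⟨c, htc, hc⟩ := hW x (t + 1)
  set r := Nat.findGreatest (W · = u) c
  have hr : W r = u := Nat.findGreatest_spec (P := (W · = u)) (by omega) ht
  have hrc : r ≤ c := Nat.findGreatest_le c
  refine le_latency_of_visit hr fun b hrb hb => ?_
  have hcb : c ≤ b := by
    by_contra! hbc
    exact Nat.findGreatest_is_greatest hrb hbc.le hb
  calc 2 * edist u x = edist (W r) (W c) + edist (W c) (W b) := by
        rw [two_mul, hr, hc, hb, edist_comm x u]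
    _ ≤ WL W r c + WL W c b := add_le_add (edist_le_walkLen hrc) (edist_le_walkLen hcb)
    _ = WL W r b := walkLen_add _ W hrc hcb

lemma exists_le_walkLen_of_ne (hW : VisitsInfOften W) {u x : V} (hux : edist u x ≠ 0) (a : ℕ)
    {L : ℝ≥0∞} (hL : L ≠ ⊤) : ∃ t, a ≤ t ∧ L ≤ WL W a t := by
  have hsteps : ∀ k : ℕ, ∃ t, a ≤ t ∧ k * edist u x ≤ WL W a t := by
    intro k
    induction k with
    | zero => exact ⟨a, le_rfl, by simp⟩
    | succ k ih =>
      obtain ⟨t, hat, hlen⟩ := ih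
      obtain ⟨t₁, ht₁, hu⟩ := hW u t
      obtain ⟨t₂, ht₂, hx⟩ := hW x t₁
      refine ⟨t₂, by omega, ?_⟩
      calc ((k + 1 : ℕ) : ℝ≥0∞) * edist u x = k * edist u x + edist (W t₁) (W t₂) := by
            rw [hu, hx]; push_cast; ring
        _ ≤ WL W a t + WL W t t₂ :=
            add_le_add hlen ((edist_le_walkLen ht₂).trans (walkLen_mono _ W ht₁ le_rfl))
        _ = WL W a t₂ := walkLen_add _ W hat (by omega)
  obtain ⟨k, hk⟩ := ENNReal.exists_nat_gt (ENNReal.div_ne_top hL hux)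
  obtain ⟨t, hat, hlen⟩ := hsteps k
  exact ⟨t, hat, ((ENNReal.div_lt_iff (Or.inl hux) (Or.inr hL)).mp hk).le.trans hlen⟩

end Metric

section Cyclic

variable (V : Type*) [Fintype V] [Nonempty V]

noncomputable def cyclicWalk (i : ℕ) : V :=
  (Fintype.equivFin V).symm ⟨i % Fintype.card V, Nat.mod_lt _ Fintype.card_pos⟩

lemma cyclicWalk_periodic : Periodic (cyclicWalk V) (Fintype.card V) := by
  intro i
  simp only [cyclicWalk, Nat.add_mod_right]

lemma visitsInfOften_cyclicWalk : VisitsInfOften (cyclicWalk V) :=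
  visitsInfOften_of_periodic Fintype.card_pos (cyclicWalk_periodic V) fun v =>
    ⟨Fintype.equivFin V v, by simp [cyclicWalk, Nat.mod_eq_of_lt (Fintype.equivFin V v).isLt]⟩

end Cyclic

/-- In the application `100 * unit` slightly exceeds `OPT`, `hub` has weight one and
`budget v = 100 * unit / φ v`. -/
structure HubWalk (V : Type*) [PseudoEMetricSpace V] where
  walk : ℕ → V
  hub : V
  unit : ℝ≥0∞
  budget : V → ℝ≥0∞
  unit_ne_zero : unit ≠ 0
  unit_ne_top : unit ≠ ⊤
  walk_zero : walk 0 = hub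
  edist_hub_le : ∀ x, edist hub x ≤ 50 * unit
  budget_hub_le : budget hub ≤ 100 * unit
  exists_return : ∀ v a, ∃ b, a < b ∧ walk b = v ∧ WL walk a b ≤ budget v
  exists_le_walkLen : ∀ L, L ≠ ⊤ → ∃ t, L ≤ WL walk 0 t

namespace HubWalk

variable {V : Type*} [PseudoEMetricSpace V] (S : HubWalk V)

lemma edist_le (x y : V) : edist x y ≤ 100 * S.unit :=
  calc edist x y ≤ edist S.hub x + edist S.hub y := edist_triangle_left _ _ _
    _ ≤ 50 * S.unit + 50 * S.unit := add_le_add (S.edist_hub_le x) (S.edist_hub_le y)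
    _ = 100 * S.unit := by ring

lemma natCast_mul_unit_ne_top (a : ℕ) : (a : ℝ≥0∞) * S.unit ≠ ⊤ :=
  ENNReal.mul_ne_top (ENNReal.natCast_ne_top a) S.unit_ne_top

lemma natCast_mul_unit_le_iff {a b : ℕ} :
    (a : ℝ≥0∞) * S.unit ≤ b * S.unit ↔ a ≤ b := by
  rw [ENNReal.mul_le_mul_iff_left S.unit_ne_zero S.unit_ne_top, Nat.cast_le]

lemma natCast_mul_unit_lt_iff {a b : ℕ} :
    (a : ℝ≥0∞) * S.unit < b * S.unit ↔ a < b := by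
  rw [ENNReal.mul_lt_mul_iff_left S.unit_ne_zero S.unit_ne_top, Nat.cast_lt]

noncomputable def arc (t : ℕ) : ℝ≥0∞ := WL S.walk 0 t

lemma arc_mono : Monotone S.arc := fun _ _ h => walkLen_mono _ _ le_rfl h

lemma arc_add {a b : ℕ} (h : a ≤ b) : S.arc a + WL S.walk a b = S.arc b :=
  walkLen_add _ _ (Nat.zero_le a) h

lemma arc_zero : S.arc 0 = 0 := walkLen_self _ _ _

lemma arc_ne_top (t : ℕ) : S.arc t ≠ ⊤ :=
  show walkLen _ _ _ _ ≠ ⊤ from ENNReal.sum_ne_top.mpr fun _ _ =>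
    ne_top_of_le_ne_top (S.natCast_mul_unit_ne_top 100) (by exact_mod_cast S.edist_le _ _)

lemma arc_succ_le (t : ℕ) : S.arc (t + 1) ≤ S.arc t + 100 * S.unit := by
  rw [arc, walkLen_succ_right _ _ (Nat.zero_le t)]
  exact add_le_add le_rfl (S.edist_le _ _)

noncomputable def hit (L : ℝ≥0∞) : ℕ :=
  if hL : L = ⊤ then 0 else Nat.find (S.exists_le_walkLen L hL)

lemma le_arc_hit {L : ℝ≥0∞} (hL : L ≠ ⊤) : L ≤ S.arc (S.hit L) := by
  rw [hit, dif_neg hL]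
  exact Nat.find_spec (S.exists_le_walkLen L hL)

lemma lt_hit_of_arc_lt {L : ℝ≥0∞} (hL : L ≠ ⊤) {t : ℕ} (h : S.arc t < L) :
    t < S.hit L := by
  by_contra! ht
  exact (h.trans_le ((S.le_arc_hit hL).trans (S.arc_mono ht))).false

lemma arc_hit_le {L : ℝ≥0∞} (hL : L ≠ ⊤) : S.arc (S.hit L) ≤ L + 100 * S.unit := by
  rw [hit, dif_neg hL]
  set t := Nat.find (S.exists_le_walkLen L hL)
  rcases Nat.eq_zero_or_pos t with ht | ht
  · rw [ht, S.arc_zero]; exact zero_le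
  · have hprev : S.arc (t - 1) < L := not_le.mp (Nat.find_min _ (Nat.sub_one_lt_of_lt ht))
    calc S.arc t = S.arc (t - 1 + 1) := by rw [Nat.sub_add_cancel ht]
      _ ≤ S.arc (t - 1) + 100 * S.unit := S.arc_succ_le _
      _ ≤ L + 100 * S.unit := add_le_add_left hprev.le _

lemma hit_zero : S.hit 0 = 0 := by
  rw [hit, dif_neg ENNReal.zero_ne_top, Nat.find_eq_zero]
  exact zero_le

noncomputable def visit (v : V) (L : ℝ≥0∞) : ℕ := (S.exists_return v (S.hit L)).choose

lemma hit_lt_visit (v : V) (L : ℝ≥0∞) : S.hit L < S.visit v L :=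
  (S.exists_return v (S.hit L)).choose_spec.1

lemma walk_visit (v : V) (L : ℝ≥0∞) : S.walk (S.visit v L) = v :=
  (S.exists_return v (S.hit L)).choose_spec.2.1

lemma walkLen_hit_visit_le (v : V) (L : ℝ≥0∞) :
    WL S.walk (S.hit L) (S.visit v L) ≤ S.budget v :=
  (S.exists_return v (S.hit L)).choose_spec.2.2

lemma le_arc_visit (v : V) {L : ℝ≥0∞} (hL : L ≠ ⊤) : L ≤ S.arc (S.visit v L) :=
  (S.le_arc_hit hL).trans (S.arc_mono (S.hit_lt_visit v L).le)

lemma arc_visit_le (v : V) {L : ℝ≥0∞} (hL : L ≠ ⊤) :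
    S.arc (S.visit v L) ≤ L + 100 * S.unit + S.budget v := by
  rw [← S.arc_add (S.hit_lt_visit v L).le]
  exact add_le_add (S.arc_hit_le hL) (S.walkLen_hit_visit_le v L)

lemma arc_visit_zero_le (v : V) : S.arc (S.visit v 0) ≤ S.budget v := by
  have h := S.walkLen_hit_visit_le v 0
  rwa [S.hit_zero] at h

noncomputable def anchor (t : ℕ) : ℕ :=
  S.visit S.hub (((10000 * (t + 1) : ℕ) : ℝ≥0∞) * S.unit)

noncomputable def tick (v : V) (j : ℕ) : ℕ := S.visit v (((25 * j : ℕ) : ℝ≥0∞) * S.unit)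

lemma walk_anchor (t : ℕ) : S.walk (S.anchor t) = S.hub := S.walk_visit _ _

lemma le_arc_anchor (t : ℕ) :
    ((10000 * (t + 1) : ℕ) : ℝ≥0∞) * S.unit ≤ S.arc (S.anchor t) :=
  S.le_arc_visit _ (S.natCast_mul_unit_ne_top _)

lemma arc_anchor_le (t : ℕ) :
    S.arc (S.anchor t) ≤ ((10000 * (t + 1) + 200 : ℕ) : ℝ≥0∞) * S.unit :=
  calc S.arc (S.anchor t)
      ≤ ((10000 * (t + 1) : ℕ) : ℝ≥0∞) * S.unit + 100 * S.unit + S.budget S.hub :=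
        S.arc_visit_le _ (S.natCast_mul_unit_ne_top _)
    _ ≤ ((10000 * (t + 1) : ℕ) : ℝ≥0∞) * S.unit + 100 * S.unit + 100 * S.unit :=
        add_le_add le_rfl S.budget_hub_le
    _ = ((10000 * (t + 1) + 200 : ℕ) : ℝ≥0∞) * S.unit := by push_cast; ring

lemma anchor_strictMono : StrictMono S.anchor := by
  intro s t hst
  refine S.arc_mono.reflect_lt <|
    (S.arc_anchor_le s).trans_lt (lt_of_lt_of_le ?_ (S.le_arc_anchor t))
  exact S.natCast_mul_unit_lt_iff.mpr (by nlinarith)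

lemma walk_tick (v : V) (j : ℕ) : S.walk (S.tick v j) = v := S.walk_visit _ _

lemma arc_tick_le (v : V) (j : ℕ) :
    S.arc (S.tick v j) ≤ ((25 * j + 100 : ℕ) : ℝ≥0∞) * S.unit + S.budget v := by
  refine (S.arc_visit_le v (S.natCast_mul_unit_ne_top _)).trans (le_of_eq ?_)
  push_cast; ring

variable {S} in
lemma walkLen_le_of_arc_le {a b : ℕ} (hab : a ≤ b) {Y : ℝ≥0∞}
    (h : S.arc b ≤ S.arc a + Y) :
    WL S.walk a b ≤ Y :=
  (ENNReal.add_le_add_iff_left (S.arc_ne_top a)).mp (by rwa [S.arc_add hab])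

lemma exists_tick_level (s : ℕ) : ∃ j, S.arc s < ((25 * j : ℕ) : ℝ≥0∞) * S.unit ∧
    ((25 * j + 100 : ℕ) : ℝ≥0∞) * S.unit ≤ S.arc s + 125 * S.unit := by
  have hex : ∃ j, S.arc s < ((25 * j : ℕ) : ℝ≥0∞) * S.unit := by
    obtain ⟨j, hj⟩ := ENNReal.exists_nat_gt (ENNReal.div_ne_top (S.arc_ne_top s) S.unit_ne_zero)
    refine ⟨j, ((ENNReal.div_lt_iff (Or.inl S.unit_ne_zero) (Or.inr (S.arc_ne_top s))).mp
      hj).trans_le ?_⟩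
    exact S.natCast_mul_unit_le_iff.mpr (by omega)
  have hpos : Nat.find hex ≠ 0 := fun h0 => by
    have h := Nat.find_spec hex
    rw [h0] at h
    simp at h
  have hprev : ((25 * (Nat.find hex - 1) : ℕ) : ℝ≥0∞) * S.unit ≤ S.arc s :=
    not_lt.mp (Nat.find_min hex (by omega))
  refine ⟨Nat.find hex, Nat.find_spec hex, ?_⟩
  calc ((25 * Nat.find hex + 100 : ℕ) : ℝ≥0∞) * S.unit
      = ((25 * (Nat.find hex - 1) : ℕ) : ℝ≥0∞) * S.unit + 125 * S.unit := by
        rw [show 25 * Nat.find hex + 100 = 25 * (Nat.find hex - 1) + 125 by omega]; push_cast; ring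
    _ ≤ S.arc s + 125 * S.unit := add_le_add hprev le_rfl

variable [Fintype V]

noncomputable def horizon : ℝ≥0∞ :=
  ((10000 * (Fintype.card V + 2) : ℕ) : ℝ≥0∞) * S.unit

noncomputable def terminus : ℕ := S.hit S.horizon

def Scheduled (v : V) (j : ℕ) : Prop :=
  ((25 * j + 100 : ℕ) : ℝ≥0∞) * S.unit + S.budget v < S.horizon

def Frequent (v : V) : Prop := S.Scheduled v 0

lemma horizon_ne_top : S.horizon ≠ ⊤ := S.natCast_mul_unit_ne_top _

lemma arc_terminus_le : S.arc S.terminus ≤ S.horizon + 100 * S.unit :=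
  S.arc_hit_le S.horizon_ne_top

lemma anchor_lt_terminus {t : ℕ} (ht : t < Fintype.card V) : S.anchor t < S.terminus :=
  S.lt_hit_of_arc_lt S.horizon_ne_top <| (S.arc_anchor_le t).trans_lt <|
    S.natCast_mul_unit_lt_iff.mpr (by nlinarith)

lemma tick_lt_terminus {v : V} {j : ℕ} (h : S.Scheduled v j) : S.tick v j < S.terminus :=
  S.lt_hit_of_arc_lt S.horizon_ne_top ((S.arc_tick_le v j).trans_lt h)

lemma lt_of_scheduled {v : V} {j : ℕ} (h : S.Scheduled v j) : j < 400 * (Fintype.card V + 2) := by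
  have hlt : ((25 * j : ℕ) : ℝ≥0∞) * S.unit < S.horizon :=
    lt_of_le_of_lt ((S.natCast_mul_unit_le_iff.mpr (by omega)).trans le_self_add) h
  have := S.natCast_mul_unit_lt_iff.mp hlt
  omega

noncomputable def stations : Finset ℕ :=
  insert 0 <| insert S.terminus <| (range (Fintype.card V)).image S.anchor ∪
    univ.biUnion fun v =>
      ((range (400 * (Fintype.card V + 2))).filter (S.Scheduled v)).image (S.tick v)

lemma zero_mem_stations : 0 ∈ S.stations := mem_insert_self _ _

lemma terminus_mem_stations : S.terminus ∈ S.stations :=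
  mem_insert_of_mem (mem_insert_self _ _)

lemma anchor_mem_stations {t : ℕ} (ht : t < Fintype.card V) : S.anchor t ∈ S.stations :=
  mem_insert_of_mem <| mem_insert_of_mem <| mem_union_left _ <|
    mem_image_of_mem _ (mem_range.mpr ht)

lemma tick_mem_stations {v : V} {j : ℕ} (h : S.Scheduled v j) : S.tick v j ∈ S.stations :=
  mem_insert_of_mem <| mem_insert_of_mem <| mem_union_right _ <| mem_biUnion.mpr
    ⟨v, mem_univ _,
      mem_image_of_mem _ (mem_filter.mpr ⟨mem_range.mpr (S.lt_of_scheduled h), h⟩)⟩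

lemma le_terminus_of_mem_stations {s : ℕ} (hs : s ∈ S.stations) : s ≤ S.terminus := by
  simp only [stations, mem_insert, mem_union, mem_image, mem_biUnion, mem_range, mem_filter] at hs
  rcases hs with rfl | rfl | ⟨t, ht, rfl⟩ | ⟨v, -, j, ⟨-, hj⟩, rfl⟩
  · exact Nat.zero_le _
  · exact le_rfl
  · exact (S.anchor_lt_terminus ht).le
  · exact (S.tick_lt_terminus hj).le

lemma card_stations_le :
    #S.stations ≤ 2 + Fintype.card V + Fintype.card V * (400 * (Fintype.card V + 2)) := by
  set anchors := (range (Fintype.card V)).image S.anchor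
  set ticks := univ.biUnion fun v =>
    ((range (400 * (Fintype.card V + 2))).filter (S.Scheduled v)).image (S.tick v)
  have hanchors : #anchors ≤ Fintype.card V := card_image_le.trans (card_range _).le
  have hticks : #ticks ≤ Fintype.card V * (400 * (Fintype.card V + 2)) :=
    card_biUnion_le_card_mul _ _ _ fun v _ =>
      card_image_le.trans ((card_filter_le _ _).trans (card_range _).le)
  calc #S.stations ≤ #(insert S.terminus (anchors ∪ ticks)) + 1 := card_insert_le _ _
    _ ≤ #(anchors ∪ ticks) + 1 + 1 := Nat.add_le_add_right (card_insert_le _ _) 1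
    _ ≤ 2 + Fintype.card V + Fintype.card V * (400 * (Fintype.card V + 2)) := by
        have := card_union_le anchors ticks
        omega

noncomputable def numStations : ℕ := #S.stations

noncomputable def station (k : ℕ) : ℕ := Nat.nth (· ∈ S.stations) k

lemma stations_finite : (Set.ofPred (· ∈ S.stations)).Finite := S.stations.finite_toSet

lemma card_stations_finite_toFinset : #S.stations_finite.toFinset = S.numStations :=
  congrArg card (finite_toSet_toFinset S.stations)

lemma numStations_pos : 0 < S.numStations := card_pos.mpr ⟨0, S.zero_mem_stations⟩

variable {S}

lemma station_mem {k : ℕ} (hk : k < S.numStations) : S.station k ∈ S.stations :=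
  Nat.nth_mem_of_lt_card S.stations_finite (by rwa [card_stations_finite_toFinset])

lemma station_lt_station {k k' : ℕ} (h : k < k') (hk' : k' < S.numStations) :
    S.station k < S.station k' :=
  Nat.nth_lt_nth_of_lt_card S.stations_finite h (by rwa [card_stations_finite_toFinset])

lemma station_le_station {k k' : ℕ} (h : k ≤ k') (hk' : k' < S.numStations) :
    S.station k ≤ S.station k' :=
  Nat.nth_le_nth_of_lt_card S.stations_finite h (by rwa [card_stations_finite_toFinset])

lemma exists_station_eq {s : ℕ} (hs : s ∈ S.stations) :
    ∃ k < S.numStations, S.station k = s := by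
  simpa only [card_stations_finite_toFinset, station] using
    Nat.exists_lt_card_finite_nth_eq S.stations_finite hs

variable (S)

lemma station_zero : S.station 0 = 0 := Nat.nth_zero_of_zero S.zero_mem_stations

lemma station_last : S.station (S.numStations - 1) = S.terminus := by
  obtain ⟨k, hk, hks⟩ := S.exists_station_eq S.terminus_mem_stations
  refine le_antisymm (S.le_terminus_of_mem_stations (station_mem (by omega))) ?_
  rw [← hks]
  exact station_le_station (by omega) (by omega)

/-- Each vertex `x` that is not frequent is visited once per period, by a detour from the hub at the anchor
indexed by `x`. -/
noncomputable def detour (s : ℕ) : Option V :=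
  if h : ∃ x, ¬ S.Frequent x ∧ S.anchor (Fintype.equivFin V x) = s then some h.choose else none

noncomputable def stopover (k : ℕ) : V :=
  (S.detour (S.station k)).getD (S.walk (S.station ((k + 1) % S.numStations)))

noncomputable def patrol (i : ℕ) : V :=
  if i % 2 = 0 then S.walk (S.station (i / 2 % S.numStations))
  else S.stopover (i / 2 % S.numStations)

noncomputable def anchorsIn (a b : ℕ) : Finset ℕ :=
  (range (Fintype.card V)).filter fun t => S.anchor t ∈ Ico a b

variable {S}

lemma detour_anchor {x : V} (hx : ¬ S.Frequent x) :
    S.detour (S.anchor (Fintype.equivFin V x)) = some x := by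
  have h : ∃ y, ¬ S.Frequent y ∧
      S.anchor (Fintype.equivFin V y) = S.anchor (Fintype.equivFin V x) := ⟨x, hx, rfl⟩
  rw [detour, dif_pos h, Option.some_inj]
  exact (Fintype.equivFin V).injective (Fin.ext (S.anchor_strictMono.injective h.choose_spec.2))

lemma detour_eq_some {s : ℕ} {x : V} (h : S.detour s = some x) :
    ¬ S.Frequent x ∧ S.anchor (Fintype.equivFin V x) = s := by
  rw [detour] at h
  split_ifs at h with hs
  exact Option.some_inj.mp h ▸ hs.choose_spec

variable (S)

lemma patrol_periodic : Periodic S.patrol (2 * S.numStations) := by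
  intro i
  have hdiv : (i + 2 * S.numStations) / 2 = i / 2 + S.numStations := by omega
  simp only [patrol, hdiv, Nat.add_mod_right, show (i + 2 * S.numStations) % 2 = i % 2 by omega]

variable {S}

lemma patrol_two_mul {k : ℕ} (hk : k < S.numStations) :
    S.patrol (2 * k) = S.walk (S.station k) := by
  simp [patrol, Nat.mod_eq_of_lt hk]

lemma patrol_two_mul_add_one {k : ℕ} (hk : k < S.numStations) :
    S.patrol (2 * k + 1) = S.stopover k := by
  simp [patrol, show (2 * k + 1) / 2 = k by omega, Nat.mod_eq_of_lt hk]

variable (S)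

lemma patrol_zero : S.patrol 0 = S.hub := by
  simpa [S.station_zero, S.walk_zero] using patrol_two_mul S.numStations_pos

lemma patrol_two_mul_numStations : S.patrol (2 * S.numStations) = S.hub := by
  simpa [S.patrol_zero] using S.patrol_periodic 0

variable {S} in
lemma patrol_two_mul_add_two {k : ℕ} (hk : k < S.numStations) :
    S.patrol (2 * k + 2) = S.walk (S.station ((k + 1) % S.numStations)) := by
  rcases Nat.lt_or_ge (k + 1) S.numStations with hk' | hk'
  · rw [Nat.mod_eq_of_lt hk', show 2 * k + 2 = 2 * (k + 1) by ring, patrol_two_mul hk']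
  · rw [show k + 1 = S.numStations by omega, Nat.mod_self,
      show 2 * k + 2 = 2 * S.numStations by omega,
      S.patrol_two_mul_numStations, S.station_zero, S.walk_zero]

lemma card_anchorsIn_add {a b c : ℕ} (hab : a ≤ b) (hbc : b ≤ c) :
    #(S.anchorsIn a b) + #(S.anchorsIn b c) = #(S.anchorsIn a c) := by
  simp only [anchorsIn]
  rw [← card_union_of_disjoint (disjoint_filter.mpr fun t _ h₁ h₂ => by
    simp only [mem_Ico] at h₁ h₂; omega)]
  congr 1
  ext t
  simp only [mem_union, mem_filter, mem_Ico, mem_range]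
  omega

variable {S}

lemma walkLen_patrol_step {k : ℕ} (hk : k + 1 < S.numStations) :
    WL S.patrol (2 * k) (2 * k + 2) ≤ WL S.walk (S.station k) (S.station (k + 1)) +
      #(S.anchorsIn (S.station k) (S.station (k + 1))) * (100 * S.unit) := by
  have hlt : S.station k < S.station (k + 1) := station_lt_station (Nat.lt_succ_self k) hk
  rw [walkLen_two, patrol_two_mul (by omega), patrol_two_mul_add_one (by omega),
    show 2 * k + 2 = 2 * (k + 1) by ring, patrol_two_mul hk]
  rcases hd : S.detour (S.station k) with _ | x
  · have hstop : S.stopover k = S.walk (S.station (k + 1)) := by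
      rw [stopover, hd, Option.getD_none, Nat.mod_eq_of_lt hk]
    rw [hstop, edist_self, add_zero]
    exact (edist_le_walkLen hlt.le).trans le_self_add
  · obtain ⟨-, hanchor⟩ := detour_eq_some hd
    have hstop : S.stopover k = x := by rw [stopover, hd, Option.getD_some]
    have hhub : S.walk (S.station k) = S.hub := by rw [← hanchor, S.walk_anchor]
    have hone : 1 ≤ #(S.anchorsIn (S.station k) (S.station (k + 1))) :=
      card_pos.mpr ⟨_, mem_filter.mpr ⟨mem_range.mpr (Fin.isLt _), by
        rw [hanchor, mem_Ico]; exact ⟨le_rfl, hlt⟩⟩⟩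
    rw [hstop, hhub]
    calc edist S.hub x + edist x (S.walk (S.station (k + 1)))
        ≤ edist S.hub x + (edist x S.hub + edist S.hub (S.walk (S.station (k + 1)))) :=
          add_le_add le_rfl (edist_triangle _ _ _)
      _ = edist S.hub (S.walk (S.station (k + 1))) + 2 * edist S.hub x := by
          rw [edist_comm x S.hub]; ring
      _ ≤ WL S.walk (S.station k) (S.station (k + 1)) + 1 * (100 * S.unit) := by
          refine add_le_add (hhub ▸ edist_le_walkLen hlt.le) ?_
          calc 2 * edist S.hub x ≤ 2 * (50 * S.unit) := by gcongr; exact S.edist_hub_le x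
            _ = 1 * (100 * S.unit) := by ring
      _ ≤ _ := by gcongr; exact_mod_cast hone

/-- Shortcutting `S.walk` between stations only shortens it; the detours cost `100 * unit`
each. -/
lemma walkLen_patrol_le {k k' : ℕ} (hkk' : k ≤ k') (hk' : k' < S.numStations) :
    WL S.patrol (2 * k) (2 * k') ≤ WL S.walk (S.station k) (S.station k') +
      #(S.anchorsIn (S.station k) (S.station k')) * (100 * S.unit) := by
  induction k', hkk' using Nat.le_induction with
  | base => simp [walkLen_self]
  | succ n hkn ih =>
    have hn : S.station k ≤ S.station n := station_le_station hkn (by omega)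
    have hn' : S.station n ≤ S.station (n + 1) := station_le_station (by omega) hk'
    calc WL S.patrol (2 * k) (2 * (n + 1))
        = WL S.patrol (2 * k) (2 * n) + WL S.patrol (2 * n) (2 * n + 2) :=
          (walkLen_add _ _ (by omega) (by omega)).symm
      _ ≤ (WL S.walk (S.station k) (S.station n) +
            #(S.anchorsIn (S.station k) (S.station n)) * (100 * S.unit)) +
          (WL S.walk (S.station n) (S.station (n + 1)) +
            #(S.anchorsIn (S.station n) (S.station (n + 1))) * (100 * S.unit)) :=
          add_le_add (ih (by omega)) (walkLen_patrol_step hk')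
      _ = _ := by
          rw [← walkLen_add _ _ hn hn', ← S.card_anchorsIn_add hn hn']
          push_cast; ring

lemma mem_anchorsIn {a b t : ℕ} :
    t ∈ S.anchorsIn a b ↔ t < Fintype.card V ∧ a ≤ S.anchor t ∧ S.anchor t < b := by
  simp [anchorsIn]

lemma card_anchorsIn_le (a b : ℕ) : #(S.anchorsIn a b) ≤ Fintype.card V :=
  (card_filter_le _ _).trans (card_range _).le

/-- Consecutive anchors are `10000 * unit` apart along the walk. -/
lemma card_anchorsIn_mul_le {a b : ℕ} :
    #(S.anchorsIn a b) * (100 * S.unit) ≤ WL S.walk a b / 100 + 102 * S.unit := by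
  set T := S.anchorsIn a b
  rcases T.eq_empty_or_nonempty with hT | hT
  · simp [hT]
  have h₁ := mem_anchorsIn.mp (T.min'_mem hT)
  have h₂ := mem_anchorsIn.mp (T.max'_mem hT)
  obtain ⟨D, hD⟩ : ∃ D, T.max' hT = T.min' hT + D :=
    Nat.exists_eq_add_of_le (T.min'_le _ (T.max'_mem hT))
  have hcard : #T ≤ D + 1 := by
    calc #T ≤ #(Icc (T.min' hT) (T.max' hT)) :=
          card_le_card fun t ht => mem_Icc.mpr ⟨T.min'_le t ht, T.le_max' t ht⟩
      _ = D + 1 := by rw [Nat.card_Icc]; omega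
  have hspread : ((10000 * D : ℕ) : ℝ≥0∞) * S.unit ≤ WL S.walk a b + 200 * S.unit := by
    refine (ENNReal.add_le_add_iff_left (S.natCast_mul_unit_ne_top (10000 * (T.min' hT + 1)))).mp ?_
    calc ((10000 * (T.min' hT + 1) : ℕ) : ℝ≥0∞) * S.unit +
          ((10000 * D : ℕ) : ℝ≥0∞) * S.unit
        = ((10000 * (T.max' hT + 1) : ℕ) : ℝ≥0∞) * S.unit := by rw [hD]; push_cast; ring
      _ ≤ S.arc (S.anchor (T.max' hT)) := S.le_arc_anchor _
      _ = S.arc (S.anchor (T.min' hT)) + WL S.walk (S.anchor (T.min' hT)) (S.anchor (T.max' hT)) :=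
          (S.arc_add (S.anchor_strictMono.monotone (by omega))).symm
      _ ≤ ((10000 * (T.min' hT + 1) + 200 : ℕ) : ℝ≥0∞) * S.unit + WL S.walk a b :=
          add_le_add (S.arc_anchor_le _) (walkLen_mono _ _ h₁.2.1 h₂.2.2.le)
      _ = _ := by push_cast; ring
  have hD : (D : ℝ≥0∞) * (100 * S.unit) ≤ WL S.walk a b / 100 + 2 * S.unit :=
    calc (D : ℝ≥0∞) * (100 * S.unit) ≤ (WL S.walk a b + 200 * S.unit) / 100 := by
          refine (ENNReal.le_div_iff_mul_le (Or.inl (by norm_num)) (Or.inl (by norm_num))).mpr ?_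
          calc (D : ℝ≥0∞) * (100 * S.unit) * 100 = ((10000 * D : ℕ) : ℝ≥0∞) * S.unit := by
                push_cast; ring
            _ ≤ _ := hspread
      _ = WL S.walk a b / 100 + 2 * S.unit := by
          rw [ENNReal.add_div, show (200 : ℝ≥0∞) * S.unit = 2 * S.unit * 100 by ring,
            ENNReal.mul_div_cancel_right (by norm_num) (by norm_num)]
  calc #T * (100 * S.unit) ≤ ((D + 1 : ℕ) : ℝ≥0∞) * (100 * S.unit) := by
        gcongr
    _ = D * (100 * S.unit) + 100 * S.unit := by push_cast; ring
    _ ≤ WL S.walk a b / 100 + 2 * S.unit + 100 * S.unit := add_le_add hD le_rfl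
    _ = WL S.walk a b / 100 + 102 * S.unit := by ring

lemma card_anchorsIn_zero_mul_le (b : ℕ) :
    #(S.anchorsIn 0 b) * (100 * S.unit) ≤ S.arc b / 100 := by
  set T := S.anchorsIn 0 b
  rcases T.eq_empty_or_nonempty with hT | hT
  · simp [hT]
  have hcard : #T ≤ T.max' hT + 1 :=
    (card_le_card fun t ht => mem_range.mpr (Nat.lt_succ_of_le (T.le_max' t ht))).trans
      (card_range _).le
  refine (ENNReal.le_div_iff_mul_le (Or.inl (by norm_num)) (Or.inl (by norm_num))).mpr ?_
  calc #T * (100 * S.unit) * 100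
      ≤ ((T.max' hT + 1 : ℕ) : ℝ≥0∞) * (100 * S.unit) * 100 := by
        gcongr
    _ = ((10000 * (T.max' hT + 1) : ℕ) : ℝ≥0∞) * S.unit := by push_cast; ring
    _ ≤ S.arc (S.anchor (T.max' hT)) := S.le_arc_anchor _
    _ ≤ S.arc b := S.arc_mono (mem_anchorsIn.mp (T.max'_mem hT)).2.2.le

variable (S)

lemma detour_terminus : S.detour S.terminus = none := by
  rcases hd : S.detour S.terminus with _ | x
  · rfl
  · exact absurd (detour_eq_some hd).2 (S.anchor_lt_terminus (Fin.isLt _)).ne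

lemma walkLen_patrol_wrap :
    WL S.patrol (2 * (S.numStations - 1)) (2 * S.numStations) ≤ 50 * S.unit := by
  have hM := S.numStations_pos
  have hstop : S.stopover (S.numStations - 1) = S.hub := by
    rw [stopover, S.station_last, S.detour_terminus, Option.getD_none,
      Nat.sub_add_cancel hM, Nat.mod_self, S.station_zero, S.walk_zero]
  rw [show 2 * S.numStations = 2 * (S.numStations - 1) + 2 by omega, walkLen_two,
    patrol_two_mul (by omega), patrol_two_mul_add_one (by omega), S.station_last, hstop,
    ← show 2 * S.numStations = 2 * (S.numStations - 1) + 2 by omega,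
    S.patrol_two_mul_numStations, edist_self, add_zero, edist_comm]
  exact S.edist_hub_le _

noncomputable def periodBound : ℝ≥0∞ :=
  S.horizon + 100 * S.unit + Fintype.card V * (100 * S.unit) + 50 * S.unit

lemma walkLen_patrol_period_le : WL S.patrol 0 (2 * S.numStations) ≤ S.periodBound := by
  have hM := S.numStations_pos
  have hsteps := walkLen_patrol_le (S := S) (Nat.zero_le (S.numStations - 1)) (by omega)
  rw [S.station_zero, S.station_last, mul_zero] at hsteps
  calc WL S.patrol 0 (2 * S.numStations)
      = WL S.patrol 0 (2 * (S.numStations - 1)) +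
          WL S.patrol (2 * (S.numStations - 1)) (2 * S.numStations) :=
        (walkLen_add _ _ (Nat.zero_le _) (by omega)).symm
    _ ≤ (S.arc S.terminus + #(S.anchorsIn 0 S.terminus) * (100 * S.unit)) + 50 * S.unit :=
        add_le_add hsteps S.walkLen_patrol_wrap
    _ ≤ (S.horizon + 100 * S.unit + Fintype.card V * (100 * S.unit)) + 50 * S.unit := by
        gcongr
        · exact S.arc_terminus_le
        · exact_mod_cast card_anchorsIn_le _ _

lemma latency_patrol_le_periodBound (v : V) :
    latency (fun x y => edist x y) S.patrol v ≤ S.periodBound :=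
  (latency_le_walkLen_period (by have := S.numStations_pos; omega) S.patrol_periodic).trans
    S.walkLen_patrol_period_le

variable {S}

lemma walkLen_patrol_le_of_le {k k' : ℕ} (hkk' : k ≤ k') (hk' : k' < S.numStations)
    {X : ℝ≥0∞} (hX : WL S.walk (S.station k) (S.station k') ≤ X) :
    WL S.patrol (2 * k) (2 * k') ≤ X + (X / 100 + 102 * S.unit) :=
  (walkLen_patrol_le hkk' hk').trans <| add_le_add hX <|
    card_anchorsIn_mul_le.trans (add_le_add (ENNReal.div_le_div_right hX _) le_rfl)

lemma walkLen_patrol_zero_le {k : ℕ} (hk : k < S.numStations) :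
    WL S.patrol 0 (2 * k) ≤ S.arc (S.station k) + S.arc (S.station k) / 100 := by
  have h := walkLen_patrol_le (S := S) (Nat.zero_le k) hk
  rw [mul_zero, S.station_zero] at h
  exact h.trans (add_le_add le_rfl (card_anchorsIn_zero_mul_le _))

variable (S) in
noncomputable def returnBound (v : V) : ℝ≥0∞ :=
  (S.budget v + 225 * S.unit) + ((S.budget v + 225 * S.unit) / 100 + 102 * S.unit) +
    50 * S.unit + (S.budget v + S.budget v / 100)

/-- The case where the next tick of `v` lies beyond the horizon: the patrol wraps around to
the first tick of `v`. -/
lemma exists_return_patrol_wrap {v : V} (hv : S.Frequent v) {k : ℕ} (hk : k < S.numStations)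
    (hhorizon : S.horizon ≤ S.arc (S.station k) + (S.budget v + 125 * S.unit)) :
    ∃ i, 2 * k < i ∧ S.patrol i = v ∧ WL S.patrol (2 * k) i ≤ S.returnBound v := by
  have hM := S.numStations_pos
  have hlast : WL S.walk (S.station k) (S.station (S.numStations - 1)) ≤
      S.budget v + 225 * S.unit := by
    rw [S.station_last]
    refine walkLen_le_of_arc_le (S.le_terminus_of_mem_stations (station_mem hk)) ?_
    calc S.arc S.terminus ≤ S.horizon + 100 * S.unit := S.arc_terminus_le
      _ ≤ S.arc (S.station k) + (S.budget v + 125 * S.unit) + 100 * S.unit :=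
          add_le_add hhorizon le_rfl
      _ = S.arc (S.station k) + (S.budget v + 225 * S.unit) := by ring
  obtain ⟨k₀, hk₀, hk₀tick⟩ := exists_station_eq (S.tick_mem_stations hv)
  have hfirst : WL S.patrol 0 (2 * k₀) ≤ S.budget v + S.budget v / 100 := by
    have harc : S.arc (S.station k₀) ≤ S.budget v := by
      simpa [hk₀tick, tick] using S.arc_visit_zero_le v
    exact (walkLen_patrol_zero_le hk₀).trans (by gcongr)
  refine ⟨2 * k₀ + 2 * S.numStations, by omega, ?_, ?_⟩
  · rw [S.patrol_periodic, patrol_two_mul hk₀, hk₀tick, S.walk_tick]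
  calc WL S.patrol (2 * k) (2 * k₀ + 2 * S.numStations)
      = WL S.patrol (2 * k) (2 * (S.numStations - 1)) +
          WL S.patrol (2 * (S.numStations - 1)) (2 * S.numStations) +
          WL S.patrol (0 + 2 * S.numStations) (2 * k₀ + 2 * S.numStations) := by
        rw [zero_add, walkLen_add _ _ (by omega) (by omega), walkLen_add _ _ (by omega) (by omega)]
    _ ≤ (S.budget v + 225 * S.unit) + ((S.budget v + 225 * S.unit) / 100 + 102 * S.unit) +
          50 * S.unit + (S.budget v + S.budget v / 100) := by
        rw [walkLen_add_period S.patrol_periodic]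
        gcongr
        · exact walkLen_patrol_le_of_le (by omega) (by omega) hlast
        · exact S.walkLen_patrol_wrap
    _ = S.returnBound v := rfl

lemma exists_return_patrol_of_station {v : V} (hv : S.Frequent v) {k : ℕ}
    (hk : k < S.numStations) :
    ∃ i, 2 * k < i ∧ S.patrol i = v ∧ WL S.patrol (2 * k) i ≤ S.returnBound v := by
  obtain ⟨j, hj, hj'⟩ := S.exists_tick_level (S.station k)
  by_cases hs : S.Scheduled v j
  · obtain ⟨k', hk', hk'tick⟩ := exists_station_eq (S.tick_mem_stations hs)
    have hlt : S.station k < S.station k' := hk'tick ▸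
      (S.lt_hit_of_arc_lt (S.natCast_mul_unit_ne_top _) hj).trans (S.hit_lt_visit _ _)
    have hkk' : k < k' := by
      by_contra! h
      exact (station_le_station h hk).not_gt hlt
    have hnext : WL S.walk (S.station k) (S.station k') ≤ S.budget v + 125 * S.unit := by
      refine walkLen_le_of_arc_le hlt.le ?_
      calc S.arc (S.station k') ≤ ((25 * j + 100 : ℕ) : ℝ≥0∞) * S.unit + S.budget v :=
            hk'tick ▸ S.arc_tick_le v j
        _ ≤ S.arc (S.station k) + 125 * S.unit + S.budget v := add_le_add hj' le_rfl
        _ = S.arc (S.station k) + (S.budget v + 125 * S.unit) := by ring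
    refine ⟨2 * k', by omega, by rw [patrol_two_mul hk', hk'tick, S.walk_tick], ?_⟩
    calc WL S.patrol (2 * k) (2 * k')
        ≤ (S.budget v + 125 * S.unit) + ((S.budget v + 125 * S.unit) / 100 + 102 * S.unit) :=
          walkLen_patrol_le_of_le hkk'.le hk' hnext
      _ ≤ (S.budget v + 225 * S.unit) + ((S.budget v + 225 * S.unit) / 100 + 102 * S.unit) := by
          gcongr <;> norm_num
      _ ≤ S.returnBound v := le_self_add.trans le_self_add
  · refine exists_return_patrol_wrap hv hk ((not_lt.mp hs).trans ?_)
    calc ((25 * j + 100 : ℕ) : ℝ≥0∞) * S.unit + S.budget v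
        ≤ S.arc (S.station k) + 125 * S.unit + S.budget v := add_le_add hj' le_rfl
      _ = S.arc (S.station k) + (S.budget v + 125 * S.unit) := by ring

variable (S) in
lemma latency_patrol_le_returnBound {v : V} (hv : S.Frequent v) :
    latency (fun x y => edist x y) S.patrol v ≤ S.returnBound v := by
  have hM := S.numStations_pos
  refine latency_le_of_periodic_returns (by omega) S.patrol_periodic fun i hi hiv => ?_
  obtain ⟨k, rfl | rfl⟩ := Nat.even_or_odd' i
  · exact exists_return_patrol_of_station hv (by omega)
  · have hkM : k < S.numStations := by omega
    rw [patrol_two_mul_add_one hkM] at hiv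
    have hnext : S.stopover k = S.patrol (2 * k + 2) := by
      rcases hd : S.detour (S.station k) with _ | x
      · rw [stopover, hd, Option.getD_none, patrol_two_mul_add_two hkM]
      · rw [stopover, hd, Option.getD_some] at hiv
        exact absurd (hiv ▸ hv) (detour_eq_some hd).1
    have hcur : S.patrol (2 * k + 1) = v := (patrol_two_mul_add_one hkM).trans hiv
    have hnext' : S.patrol (2 * k + 1 + 1) = v := hnext ▸ hiv
    refine ⟨2 * k + 1 + 1, by omega, hnext', ?_⟩
    rw [walkLen_one, hcur, hnext', edist_self]
    exact zero_le

variable (S)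

section Cost

variable {φ : V → ℝ≥0∞} (hφ : ∀ v, φ v ≤ 1)
  (hφS : ∀ v, φ v * S.budget v ≤ 100 * S.unit)
include hφ hφS

omit [Fintype V] in
lemma mul_returnBound_le (v : V) : φ v * S.returnBound v ≤ 582 * S.unit := by
  have hle : ∀ x, φ v * x ≤ x := fun _ => mul_le_of_le_one_left' (hφ v)
  have hdiv : ∀ {x : ℝ≥0∞} (c : ℝ≥0∞), φ v * x ≤ c * 100 → φ v * (x / 100) ≤ c := by
    intro x c h
    rwa [← mul_div_assoc, ENNReal.div_le_iff (by norm_num) (by norm_num)]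
  have h₁ : φ v * (S.budget v + 225 * S.unit) ≤ 325 * S.unit := by
    rw [mul_add]
    calc φ v * S.budget v + φ v * (225 * S.unit) ≤ 100 * S.unit + 225 * S.unit :=
          add_le_add (hφS v) (hle _)
      _ = 325 * S.unit := by ring
  have h₂ : φ v * ((S.budget v + 225 * S.unit) / 100) ≤ 4 * S.unit :=
    hdiv _ (h₁.trans (by
      calc 325 * S.unit ≤ 400 * S.unit := by gcongr; norm_num
        _ = 4 * S.unit * 100 := by ring))
  have h₃ : φ v * (S.budget v / 100) ≤ S.unit :=
    hdiv _ ((hφS v).trans (le_of_eq (mul_comm _ _)))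
  calc φ v * S.returnBound v
      = φ v * (S.budget v + 225 * S.unit) +
          (φ v * ((S.budget v + 225 * S.unit) / 100) + φ v * (102 * S.unit)) +
          φ v * (50 * S.unit) + (φ v * S.budget v + φ v * (S.budget v / 100)) := by
        simp only [returnBound, mul_add]
    _ ≤ 325 * S.unit + (4 * S.unit + 102 * S.unit) + 50 * S.unit + (100 * S.unit + S.unit) :=
        add_le_add (add_le_add (add_le_add h₁ (add_le_add h₂ (hle _))) (hle _))
          (add_le_add (hφS v) h₃)
    _ = 582 * S.unit := by ring

/-- A vertex that is not frequent has weight `O(unit / horizon)`, which pays for the long period. -/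
lemma mul_periodBound_le {v : V} (hv : ¬ S.Frequent v) :
    φ v * S.periodBound ≤ 352 * S.unit := by
  have hle : ∀ x, φ v * x ≤ x := fun _ => mul_le_of_le_one_left' (hφ v)
  have hhorizon : φ v * S.horizon ≤ 200 * S.unit := by
    have h : S.horizon ≤ 100 * S.unit + S.budget v := by simpa [Frequent, Scheduled] using hv
    calc φ v * S.horizon ≤ φ v * (100 * S.unit) + φ v * S.budget v := by
          rw [← mul_add]; gcongr
      _ ≤ 100 * S.unit + 100 * S.unit := add_le_add (hle _) (hφS v)
      _ = 200 * S.unit := by ring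
  have hdetours : φ v * (Fintype.card V * (100 * S.unit)) ≤ 2 * S.unit := by
    rw [← ENNReal.mul_le_mul_iff_left (by norm_num : (100 : ℝ≥0∞) ≠ 0) (by norm_num)]
    calc φ v * (Fintype.card V * (100 * S.unit)) * 100
        = φ v * (((100 * Fintype.card V : ℕ) : ℝ≥0∞) * (100 * S.unit)) := by
          push_cast; ring
      _ ≤ φ v * S.horizon := by
          refine mul_le_mul_right ?_ _
          calc (((100 * Fintype.card V : ℕ) : ℝ≥0∞) * (100 * S.unit))
              = ((10000 * Fintype.card V : ℕ) : ℝ≥0∞) * S.unit := by push_cast; ring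
            _ ≤ S.horizon := S.natCast_mul_unit_le_iff.mpr (by omega)
      _ ≤ 200 * S.unit := hhorizon
      _ = 2 * S.unit * 100 := by ring
  calc φ v * S.periodBound
      = φ v * S.horizon + φ v * (100 * S.unit) + φ v * (Fintype.card V * (100 * S.unit)) +
          φ v * (50 * S.unit) := by simp only [periodBound, mul_add]
    _ ≤ 200 * S.unit + 100 * S.unit + 2 * S.unit + 50 * S.unit :=
        add_le_add (add_le_add (add_le_add hhorizon (hle _)) hdetours) (hle _)
    _ = 352 * S.unit := by ring

lemma walkCost_patrol_le : walkCost (fun x y => edist x y) φ S.patrol ≤ 582 * S.unit := by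
  refine iSup_le fun v => ?_
  by_cases hv : S.Frequent v
  · exact (mul_le_mul_right (S.latency_patrol_le_returnBound hv) _).trans
      (S.mul_returnBound_le hφ hφS v)
  · calc φ v * latency (fun x y => edist x y) S.patrol v ≤ φ v * S.periodBound :=
          mul_le_mul_right (S.latency_patrol_le_periodBound v) _
      _ ≤ 352 * S.unit := S.mul_periodBound_le hφ hφS hv
      _ ≤ 582 * S.unit := by gcongr; norm_num

end Cost

lemma visitsInfOften_patrol : VisitsInfOften S.patrol := by
  refine visitsInfOften_of_periodic (by have := S.numStations_pos; omega) S.patrol_periodic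
    fun v => ?_
  by_cases hv : S.Frequent v
  · obtain ⟨k, hk, hktick⟩ := exists_station_eq (S.tick_mem_stations hv)
    exact ⟨2 * k, by rw [patrol_two_mul hk, hktick, S.walk_tick]⟩
  · obtain ⟨k, hk, hkanchor⟩ :=
      exists_station_eq (S.anchor_mem_stations (Fin.isLt (Fintype.equivFin V v)))
    exact ⟨2 * k + 1, by rw [patrol_two_mul_add_one hk, stopover, hkanchor, detour_anchor hv,
      Option.getD_some]⟩

lemma two_mul_numStations_le : 2 * S.numStations ≤ 2500 * Fintype.card V ^ 2 := by
  have h := S.card_stations_le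
  have hn : 1 ≤ Fintype.card V := Fintype.card_pos_iff.mpr ⟨S.hub⟩
  rw [numStations]
  nlinarith

end HubWalk

section Construction

variable {V : Type*} [PseudoEMetricSpace V]

lemma two_mul_edist_le_OPT {φ : V → ℝ≥0∞} {u : V} (hu : φ u = 1) (x : V) :
    2 * edist u x ≤ OPT (fun x y => edist x y) φ :=
  le_iInf₂ fun W hW => (two_mul_edist_le_latency hW u x).trans <| by
    simpa only [hu, one_mul] using mul_latency_le_walkCost (fun x y => edist x y) φ W u

lemma walkCost_eq_zero_of_subsingleton [Subsingleton V] {W : ℕ → V} {p : ℕ} (hp : 0 < p)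
    (hW : Periodic W p) (φ : V → ℝ≥0∞) : walkCost (fun x y => edist x y) φ W = 0 := by
  refine le_antisymm (iSup_le fun v => ?_) zero_le
  have hlen : WL W 0 p = 0 :=
    Finset.sum_eq_zero fun i _ => by simp only [Subsingleton.elim (W i) (W (i + 1)), edist_self]
  simpa [hlen] using
    mul_le_mul_right (latency_le_walkLen_period (l := fun x y => edist x y) (v := v) hp hW) (φ v)

lemma exists_hubWalk [Fintype V] {φ : V → ℝ≥0∞} (hφ : ∀ v, φ v ≠ 0 ∧ φ v ≠ ⊤) {u x : V}
    (hu : φ u = 1) (hux : edist u x ≠ 0)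
    {q : ℝ≥0∞} (hq : q ≠ ⊤) (hOPT : OPT (fun x y => edist x y) φ < 100 * q) :
    ∃ S : HubWalk V, S.unit = q ∧ ∀ v, φ v * S.budget v ≤ 100 * S.unit := by
  obtain ⟨f, hf⟩ := iInf_lt_iff.mp hOPT
  obtain ⟨hfvis, hfcost⟩ := iInf_lt_iff.mp hf
  have hq0 : q ≠ 0 := by rintro rfl; simp at hOPT
  have hlat : ∀ v, latency (fun x y => edist x y) f v < 100 * q / φ v := fun v =>
    (ENNReal.lt_div_iff_mul_lt (Or.inl (hφ v).1) (Or.inl (hφ v).2)).mpr <| by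
      rw [mul_comm]
      exact (mul_latency_le_walkCost (fun x y => edist x y) φ f v).trans_lt hfcost
  -- restart `f` at a visit to the hub made after every vertex has been seen
  choose t ht using fun v => hfvis v 0
  obtain ⟨s, hs, hsu⟩ := hfvis u (univ.sup t)
  have hts : ∀ v, t v ≤ s := fun v => (le_sup (mem_univ v)).trans hs
  refine ⟨{
      walk := fun i => f (i + s)
      hub := u
      unit := q
      budget := fun v => 100 * q / φ v
      unit_ne_zero := hq0
      unit_ne_top := hq
      walk_zero := by simpa using hsu
      edist_hub_le := fun y => ?_
      budget_hub_le := by simp [hu]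
      exists_return := fun v a => ?_
      exists_le_walkLen := fun L hL => ?_ }, rfl, fun v => ENNReal.mul_div_le⟩
  · have h := (two_mul_edist_le_latency hfvis u y).trans (hlat u).le
    rw [hu, div_one, show (100 : ℝ≥0∞) * q = 2 * (50 * q) by ring] at h
    exact (ENNReal.mul_le_mul_iff_right two_ne_zero ENNReal.ofNat_ne_top).mp h
  · obtain ⟨b, hab, hb, hlen⟩ :=
      exists_visit_after_of_latency_lt (hlat v) (by have := hts v; omega : t v ≤ a + s) (ht v).2
    refine ⟨b - s, by omega, by simpa [Nat.sub_add_cancel (by omega : s ≤ b)] using hb, ?_⟩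
    rw [walkLen_comp_add, Nat.sub_add_cancel (by omega)]
    exact hlen.le
  · obtain ⟨b, hsb, hlen⟩ := exists_le_walkLen_of_ne hfvis hux s hL
    exact ⟨b - s, by rwa [walkLen_comp_add, zero_add, Nat.sub_add_cancel hsb]⟩

lemma walkCost_cyclicWalk_le [Fintype V] [Nonempty V] (φ : V → ℝ≥0∞)
    (h : Subsingleton V ∨ OPT (fun x y => edist x y) φ = ⊤) :
    walkCost (fun x y => edist x y) φ (cyclicWalk V) ≤ 6 * OPT (fun x y => edist x y) φ := by
  rcases h with h | h
  · rw [walkCost_eq_zero_of_subsingleton Fintype.card_pos (cyclicWalk_periodic V)]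
    exact zero_le
  · rw [h, ENNReal.mul_top (by norm_num)]
    exact le_top

end Construction

/-- Take `q = r / 97`: then `582 = 6 * 97` gives the factor `6`. -/
lemma exists_unit_of_ne_zero_of_ne_top {r : ℝ≥0∞} (hr0 : r ≠ 0) (hrtop : r ≠ ⊤) :
    ∃ q, q ≠ ⊤ ∧ r < 100 * q ∧ 582 * q = 6 * r := by
  have hq0 : r / 97 ≠ 0 := ENNReal.div_ne_zero.mpr ⟨hr0, by norm_num⟩
  have hqtop : r / 97 ≠ ⊤ := ENNReal.div_ne_top hrtop (by norm_num)
  have hr : r = 97 * (r / 97) := (ENNReal.mul_div_cancel (by norm_num) (by norm_num)).symm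
  refine ⟨r / 97, hqtop, ?_, ?_⟩
  · nth_rw 1 [hr]
    exact (ENNReal.mul_lt_mul_iff_left hq0 hqtop).mpr (by norm_num)
  · nth_rw 2 [hr]
    ring

/-- For any metric graph with n vertices there is a closed walk of size O(n²) whose
infinite expansion has cost at most 6·OPT. -/
theorem exists_quadratic_constant_factor_walk :
    ∃ C : ℕ, ∀ (V : Type) [MetricSpace V] [Fintype V] [Nonempty V]
      (φ : V → ℝ≥0∞), (∀ v, 0 < φ v ∧ φ v ≤ 1) → (∃ v, φ v = 1) →
      ∃ (W : ℕ → V) (p : ℕ), 0 < p ∧ p ≤ C * Fintype.card V ^ 2 ∧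
        (∀ i, W (i + p) = W i) ∧ VisitsInfOften W ∧
        walkCost (fun x y => edist x y) φ W ≤
          6 * OPT (fun x y => edist x y) φ := by
  refine ⟨2500, fun V _ _ _ φ hφ ⟨u, hu⟩ => ?_⟩
  set r := OPT (fun x y => edist x y) φ
  by_cases htriv : Subsingleton V ∨ r = ⊤
  · exact ⟨cyclicWalk V, Fintype.card V, Fintype.card_pos,
      by nlinarith [Fintype.card_pos (α := V)], cyclicWalk_periodic V,
      visitsInfOften_cyclicWalk V, walkCost_cyclicWalk_le φ htriv⟩
  obtain ⟨hsub, hrtop⟩ := not_or.mp htriv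
  have := not_subsingleton_iff_nontrivial.mp hsub
  obtain ⟨x, hx⟩ := exists_ne u
  have hux : edist u x ≠ 0 := (edist_pos.mpr (Ne.symm hx)).ne'
  have hr0 : r ≠ 0 := fun h => hux (by simpa [r, h] using two_mul_edist_le_OPT hu x)
  obtain ⟨q, hqtop, hlt, hq⟩ := exists_unit_of_ne_zero_of_ne_top hr0 hrtop
  obtain ⟨S, rfl, hS⟩ :=
    exists_hubWalk (fun v => ⟨(hφ v).1.ne', ((hφ v).2.trans_lt ENNReal.one_lt_top).ne⟩)
      hu hux hqtop hlt
  exact ⟨S.patrol, 2 * S.numStations, by have := S.numStations_pos; omega,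
    S.two_mul_numStations_le, S.patrol_periodic, S.visitsInfOften_patrol,
    (S.walkCost_patrol_le (fun v => (hφ v).2) hS).trans hq.le⟩
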